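/- arXiv:math/0701510 — 3 statements merged into one kernel-verified Lean document; each statement's English description precedes it below -/
import Mathlib

section
/- Let F = u + i·v be holomorphic on the upper half complex plane, and let f : ℍ → ℍ be the function obtained by Fueter's construction, f(p) = u(t,r) + ι(p)·v(t,r). Then on the set of quaternions with nonzero imaginary part, D_l f = D_r f = −2·v(t,r)/r. -/
open Quaternion

noncomputable section

/-- The basis quaternion `i`. -/
def qi : ℍ[ℝ] := ⟨0,1,0,0⟩
/-- The basis quaternion `j`. -/
def qj : ℍ[ℝ] := ⟨0,0,1,0⟩
/-- The basis quaternion `k`. -/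
def qk : ℍ[ℝ] := ⟨0,0,0,1⟩

/-- Partial derivative of `f : ℍ → ℍ` in the real (`t`) direction. -/
def pt (f : ℍ[ℝ] → ℍ[ℝ]) (p : ℍ[ℝ]) : ℍ[ℝ] := fderiv ℝ f p 1
/-- Partial derivative in the `i` (`x`) direction. -/
def px (f : ℍ[ℝ] → ℍ[ℝ]) (p : ℍ[ℝ]) : ℍ[ℝ] := fderiv ℝ f p qi
/-- Partial derivative in the `j` (`y`) direction. -/
def py (f : ℍ[ℝ] → ℍ[ℝ]) (p : ℍ[ℝ]) : ℍ[ℝ] := fderiv ℝ f p qj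
/-- Partial derivative in the `k` (`z`) direction. -/
def pz (f : ℍ[ℝ] → ℍ[ℝ]) (p : ℍ[ℝ]) : ℍ[ℝ] := fderiv ℝ f p qk

/-- The left Fueter operator `D_l f = ∂f/∂t + i ∂f/∂x + j ∂f/∂y + k ∂f/∂z`. -/
def Dl (f : ℍ[ℝ] → ℍ[ℝ]) (p : ℍ[ℝ]) : ℍ[ℝ] :=
  pt f p + qi * px f p + qj * py f p + qk * pz f p
/-- The right Fueter operator `D_r f = ∂f/∂t + (∂f/∂x) i + (∂f/∂y) j + (∂f/∂z) k`. -/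
def Dr (f : ℍ[ℝ] → ℍ[ℝ]) (p : ℍ[ℝ]) : ℍ[ℝ] :=
  pt f p + px f p * qi + py f p * qj + pz f p * qk
/-- The conjugate left Fueter operator `D̄_l f = ∂f/∂t - i ∂f/∂x - j ∂f/∂y - k ∂f/∂z`. -/
def Dlbar (f : ℍ[ℝ] → ℍ[ℝ]) (p : ℍ[ℝ]) : ℍ[ℝ] :=
  pt f p - qi * px f p - qj * py f p - qk * pz f p
/-- The Laplacian `Δf = ∂²f/∂t² + ∂²f/∂x² + ∂²f/∂y² + ∂²f/∂z²`. -/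
def Lap (f : ℍ[ℝ] → ℍ[ℝ]) (p : ℍ[ℝ]) : ℍ[ℝ] :=
  pt (pt f) p + px (px f) p + py (py f) p + pz (pz f) p

/-- `r = √(x² + y² + z²)`, the norm of the imaginary part of `p`. -/
def rad (p : ℍ[ℝ]) : ℝ := Real.sqrt (p.imI^2 + p.imJ^2 + p.imK^2)
/-- `ι(p) = (x i + y j + z k)/r`, the normalized imaginary part of `p`. -/
def iot (p : ℍ[ℝ]) : ℍ[ℝ] := (rad p)⁻¹ • Quaternion.im p

/-!
Near a point with nonzero imaginary part, `f` is `u + ι v` evaluated at `t + i r`. Because `F`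
is holomorphic, the real derivative of `F (t + i r)` is multiplication by `F'`, so `∂f/∂t` is the
quaternion `A = Re F' + ι Im F'` obtained from `F'` by the same recipe, and for an imaginary
direction `e` the chain rule gives `∂f/∂e = ⟪ι, e⟫ ι A + (v / r) (e - ⟪ι, e⟫ ι)`, the second
term being the derivative of `ι = Im p / |Im p|`. Summing `e ∂f/∂e` over `e = i, j, k` with
`∑ ⟪ι, e⟫ e = ι` and `∑ e² = -3`, the first terms add up to `ι² A = -A`, cancelling `∂f/∂t`,
and the second to `(v / r) (-3 - ι²) = -2 v / r`. On the right the same happens because `A`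
commutes with `ι`.
-/

open scoped RealInnerProductSpace

section NormCalculus

variable {E : Type*} [NormedAddCommGroup E] [InnerProductSpace ℝ E] {x : E}

theorem hasFDerivAt_norm_of_ne_zero (hx : x ≠ 0) :
    HasFDerivAt (‖·‖) (innerSL ℝ (‖x‖⁻¹ • x)) x := by
  have h := (hasStrictFDerivAt_norm_sq x).hasFDerivAt.sqrt (by positivity)
  simp only [Real.sqrt_sq (norm_nonneg _)] at h
  refine h.congr_fderiv ?_
  ext y
  simp only [one_div, mul_inv_rev, smul_apply, coe_innerSL_apply, nsmul_eq_mul, Nat.cast_ofNat,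
    smul_eq_mul, map_smul]
  field_simp

theorem hasFDerivAt_inv_norm_smul (hx : x ≠ 0) :
    HasFDerivAt (fun y : E => ‖y‖⁻¹ • y)
      (‖x‖⁻¹ • (ContinuousLinearMap.id ℝ E - (innerSL ℝ (‖x‖⁻¹ • x)).smulRight (‖x‖⁻¹ • x))) x := by
  have h := ((hasDerivAt_inv (norm_ne_zero_iff.2 hx)).comp_hasFDerivAt x
    (hasFDerivAt_norm_of_ne_zero hx)).smul (hasFDerivAt_id x)
  refine h.congr_fderiv ?_
  ext y
  simp only [Function.comp_apply, map_smul, smul_smul, neg_mul, neg_smul, id_eq, add_apply,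
    smul_apply, ContinuousLinearMap.id_apply, ContinuousLinearMap.smulRight_apply, neg_apply,
    coe_innerSL_apply, smul_eq_mul, sub_apply]
  module

end NormCalculus

namespace Quaternion

def reCLM : ℍ[ℝ] →L[ℝ] ℝ := (QuaternionAlgebra.reₗ _ _ _).toContinuousLinearMap

def imCLM : ℍ[ℝ] →L[ℝ] ℍ[ℝ] :=
  LinearMap.toContinuousLinearMap
    { toFun := Quaternion.im, map_add' := im_add, map_smul' := fun c a => im_smul a c }

@[simp] lemma reCLM_apply (q : ℍ[ℝ]) : reCLM q = q.re := rfl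

@[simp] lemma imCLM_apply (q : ℍ[ℝ]) : imCLM q = q.im := by simp [imCLM]

lemma coe_eq_smul_one (x : ℝ) : (x : ℍ[ℝ]) = x • 1 := by
  rw [← coe_mul_eq_smul, mul_one]

end Quaternion

@[simp] lemma qi_re : qi.re = 0 := rfl
@[simp] lemma qi_imI : qi.imI = 1 := rfl
@[simp] lemma qi_imJ : qi.imJ = 0 := rfl
@[simp] lemma qi_imK : qi.imK = 0 := rfl
@[simp] lemma qj_re : qj.re = 0 := rfl
@[simp] lemma qj_imI : qj.imI = 0 := rfl
@[simp] lemma qj_imJ : qj.imJ = 1 := rfl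
@[simp] lemma qj_imK : qj.imK = 0 := rfl
@[simp] lemma qk_re : qk.re = 0 := rfl
@[simp] lemma qk_imI : qk.imI = 0 := rfl
@[simp] lemma qk_imJ : qk.imJ = 0 := rfl
@[simp] lemma qk_imK : qk.imK = 1 := rfl

lemma qi_mul_qi : qi * qi = -1 := by ext <;> simp
lemma qj_mul_qj : qj * qj = -1 := by ext <;> simp
lemma qk_mul_qk : qk * qk = -1 := by ext <;> simp

lemma sum_inner_smul_basis {ω : ℍ[ℝ]} (hω : ω.re = 0) :
    ⟪ω, qi⟫ • qi + ⟪ω, qj⟫ • qj + ⟪ω, qk⟫ • qk = ω := by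
  ext <;> simp [Quaternion.inner_def, hω]

lemma rad_eq_norm_im (p : ℍ[ℝ]) : rad p = ‖p.im‖ := by
  rw [rad, norm_eq_sqrt_real_inner, Quaternion.inner_self, Quaternion.normSq_def']
  simp

lemma rad_pos {p : ℍ[ℝ]} (hp : p.im ≠ 0) : 0 < rad p := by
  rw [rad_eq_norm_im]
  exact norm_pos_iff.2 hp

lemma iot_eq_inv_norm_smul (p : ℍ[ℝ]) : iot p = ‖p.im‖⁻¹ • p.im := by
  rw [iot, rad_eq_norm_im]

lemma iot_mul_iot {p : ℍ[ℝ]} (hp : p.im ≠ 0) : iot p * iot p = -1 := by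
  have hr := (rad_pos hp).ne'
  rw [iot, smul_mul_smul_comm, ← sq p.im, Quaternion.im_sq, Quaternion.normSq_eq_norm_mul_self,
    ← rad_eq_norm_im, smul_neg, Quaternion.smul_coe, ← mul_inv, inv_mul_cancel₀ (mul_ne_zero hr hr),
    Quaternion.coe_one]

def slicePoint (q : ℍ[ℝ]) : ℂ := ⟨q.re, rad q⟩

def fueterMap (F : ℂ → ℂ) (q : ℍ[ℝ]) : ℍ[ℝ] :=
  ((F (slicePoint q)).re : ℍ[ℝ]) + iot q * ((F (slicePoint q)).im : ℍ[ℝ])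

lemma fueterMap_eq_smul (F : ℂ → ℂ) (q : ℍ[ℝ]) :
    fueterMap F q = (F (slicePoint q)).re • (1 : ℍ[ℝ]) + (F (slicePoint q)).im • iot q := by
  rw [fueterMap, Quaternion.mul_coe_eq_smul, Quaternion.coe_eq_smul_one]

lemma iot_mul_fueterMap_comm (F : ℂ → ℂ) (p : ℍ[ℝ]) :
    iot p * fueterMap F p = fueterMap F p * iot p := by
  simp only [fueterMap_eq_smul, mul_add, add_mul, mul_smul_comm, smul_mul_assoc, mul_one, one_mul]

section Derivatives

variable {p : ℍ[ℝ]}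

lemma hasFDerivAt_rad (hp : p.im ≠ 0) : HasFDerivAt rad ((innerSL ℝ (iot p)).comp imCLM) p := by
  have h := (hasFDerivAt_norm_of_ne_zero (x := imCLM p) hp).comp p imCLM.hasFDerivAt
  rw [imCLM_apply, ← iot_eq_inv_norm_smul] at h
  exact h.congr_of_eventuallyEq (.of_forall fun q => by simp [rad_eq_norm_im])

lemma hasFDerivAt_iot (hp : p.im ≠ 0) :
    HasFDerivAt iot
      (((rad p)⁻¹ • (ContinuousLinearMap.id ℝ ℍ[ℝ] -
        (innerSL ℝ (iot p)).smulRight (iot p))).comp imCLM) p := by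
  have h := (hasFDerivAt_inv_norm_smul (x := imCLM p) hp).comp p imCLM.hasFDerivAt
  rw [imCLM_apply, ← iot_eq_inv_norm_smul, ← rad_eq_norm_im] at h
  exact h.congr_of_eventuallyEq (.of_forall fun q => by simp [iot_eq_inv_norm_smul])

lemma hasFDerivAt_slicePoint (hp : p.im ≠ 0) :
    HasFDerivAt slicePoint
      (reCLM.smulRight 1 + ((innerSL ℝ (iot p)).comp imCLM).smulRight Complex.I) p := by
  refine ((reCLM.hasFDerivAt.smul_const (1 : ℂ)).add
    ((hasFDerivAt_rad hp).smul_const Complex.I)).congr_of_eventuallyEq (.of_forall fun q => ?_)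
  apply Complex.ext <;> simp [slicePoint]

lemma fderiv_slicePoint_apply (hp : p.im ≠ 0) (h : ℍ[ℝ]) :
    fderiv ℝ slicePoint p h = ⟨h.re, ⟪iot p, h.im⟫⟩ := by
  rw [(hasFDerivAt_slicePoint hp).fderiv]
  apply Complex.ext <;> simp

lemma fderiv_iot_apply (hp : p.im ≠ 0) (h : ℍ[ℝ]) :
    fderiv ℝ iot p h = (rad p)⁻¹ • (h.im - ⟪iot p, h.im⟫ • iot p) := by
  rw [(hasFDerivAt_iot hp).fderiv]
  simp

variable {F : ℂ → ℂ}

lemma fderiv_fueterMap_apply (hF : DifferentiableAt ℂ F (slicePoint p)) (hp : p.im ≠ 0)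
    (h : ℍ[ℝ]) :
    fderiv ℝ (fueterMap F) p h =
      (deriv F (slicePoint p) * fderiv ℝ slicePoint p h).re • (1 : ℍ[ℝ])
        + (deriv F (slicePoint p) * fderiv ℝ slicePoint p h).im • iot p
        + (F (slicePoint p)).im • fderiv ℝ iot p h := by
  have hFz := (hF.hasFDerivAt.restrictScalars ℝ).comp p
    (hasFDerivAt_slicePoint hp).differentiableAt.hasFDerivAt
  have hu := (Complex.reCLM.hasFDerivAt.comp p hFz).smul_const (1 : ℍ[ℝ])
  have hv := (Complex.imCLM.hasFDerivAt.comp p hFz).smul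
    (hasFDerivAt_iot hp).differentiableAt.hasFDerivAt
  rw [((hu.add hv).congr_of_eventuallyEq (.of_forall (fueterMap_eq_smul F))).fderiv]
  simp only [Function.comp_apply, Complex.imCLM_apply, add_apply,
    ContinuousLinearMap.smulRight_apply, ContinuousLinearMap.comp_apply,
    ContinuousLinearMap.coe_restrictScalars', fderiv_eq_smul_deriv, smul_eq_mul, mul_comm,
    Complex.reCLM_apply, Complex.mul_re, smul_apply, Complex.mul_im]
  abel

lemma fderiv_fueterMap_one (hF : DifferentiableAt ℂ F (slicePoint p)) (hp : p.im ≠ 0) :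
    fderiv ℝ (fueterMap F) p 1 = fueterMap (deriv F) p := by
  rw [fderiv_fueterMap_apply hF hp, fderiv_slicePoint_apply hp, fderiv_iot_apply hp,
    fueterMap_eq_smul]
  simp

lemma fderiv_fueterMap_apply_of_re_eq_zero (hF : DifferentiableAt ℂ F (slicePoint p))
    (hp : p.im ≠ 0) {e : ℍ[ℝ]} (he : e.re = 0) :
    fderiv ℝ (fueterMap F) p e =
      ⟪iot p, e⟫ • (iot p * fueterMap (deriv F) p)
        + ((F (slicePoint p)).im / rad p) • (e - ⟪iot p, e⟫ • iot p) := by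
  have he' : e.im = e := by
    rw [← Quaternion.re_add_im e, he]
    simp
  rw [fderiv_fueterMap_apply hF hp, fderiv_slicePoint_apply hp, fderiv_iot_apply hp,
    fueterMap_eq_smul, he, he']
  simp only [Complex.mul_re, Complex.mul_im, mul_add, mul_smul_comm, iot_mul_iot hp, mul_one]
  module

theorem Dl_fueterMap (hF : DifferentiableAt ℂ F (slicePoint p)) (hp : p.im ≠ 0) :
    Dl (fueterMap F) p = ((-2 * (F (slicePoint p)).im / rad p : ℝ) : ℍ[ℝ]) := by
  rw [mul_div_assoc]
  set A := fueterMap (deriv F) p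
  set ι := iot p
  set t := (F (slicePoint p)).im / rad p
  have hι : ι.re = 0 := by simp [ι, iot]
  calc Dl (fueterMap F) p
      = A + (⟪ι, qi⟫ • qi + ⟪ι, qj⟫ • qj + ⟪ι, qk⟫ • qk) * (ι * A)
          + t • (qi * qi + qj * qj + qk * qk)
          - t • ((⟪ι, qi⟫ • qi + ⟪ι, qj⟫ • qj + ⟪ι, qk⟫ • qk) * ι) := by
        simp only [Dl, pt, px, py, pz, fderiv_fueterMap_one hF hp,
          fderiv_fueterMap_apply_of_re_eq_zero hF hp qi_re,
          fderiv_fueterMap_apply_of_re_eq_zero hF hp qj_re,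
          fderiv_fueterMap_apply_of_re_eq_zero hF hp qk_re,
          mul_add, mul_sub, add_mul, mul_smul_comm, smul_mul_assoc]
        module
    _ = A + ι * (ι * A) + t • (-3 : ℝ) • (1 : ℍ[ℝ]) - t • (ι * ι) := by
        rw [sum_inner_smul_basis hι, qi_mul_qi, qj_mul_qj, qk_mul_qk]
        module
    _ = _ := by
        rw [← mul_assoc, iot_mul_iot hp, neg_one_mul, Quaternion.coe_eq_smul_one]
        module

theorem Dr_fueterMap (hF : DifferentiableAt ℂ F (slicePoint p)) (hp : p.im ≠ 0) :
    Dr (fueterMap F) p = ((-2 * (F (slicePoint p)).im / rad p : ℝ) : ℍ[ℝ]) := by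
  rw [mul_div_assoc]
  set A := fueterMap (deriv F) p
  set ι := iot p
  set t := (F (slicePoint p)).im / rad p
  have hι : ι.re = 0 := by simp [ι, iot]
  calc Dr (fueterMap F) p
      = A + (ι * A) * (⟪ι, qi⟫ • qi + ⟪ι, qj⟫ • qj + ⟪ι, qk⟫ • qk)
          + t • (qi * qi + qj * qj + qk * qk)
          - t • (ι * (⟪ι, qi⟫ • qi + ⟪ι, qj⟫ • qj + ⟪ι, qk⟫ • qk)) := by
        simp only [Dr, pt, px, py, pz, fderiv_fueterMap_one hF hp,
          fderiv_fueterMap_apply_of_re_eq_zero hF hp qi_re,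
          fderiv_fueterMap_apply_of_re_eq_zero hF hp qj_re,
          fderiv_fueterMap_apply_of_re_eq_zero hF hp qk_re,
          mul_add, sub_mul, add_mul, mul_smul_comm, smul_mul_assoc]
        module
    _ = A + ι * (ι * A) + t • (-3 : ℝ) • (1 : ℍ[ℝ]) - t • (ι * ι) := by
        rw [sum_inner_smul_basis hι, qi_mul_qi, qj_mul_qj, qk_mul_qk, mul_assoc,
          ← iot_mul_fueterMap_comm]
        module
    _ = _ := by
        rw [← mul_assoc, iot_mul_iot hp, neg_one_mul, Quaternion.coe_eq_smul_one]
        module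

end Derivatives

section LocalOperators

variable {f g : ℍ[ℝ] → ℍ[ℝ]} {p : ℍ[ℝ]}

lemma Filter.EventuallyEq.Dl_eq (h : f =ᶠ[nhds p] g) : Dl f p = Dl g p := by
  simp only [Dl, pt, px, py, pz, h.fderiv_eq]

lemma Filter.EventuallyEq.Dr_eq (h : f =ᶠ[nhds p] g) : Dr f p = Dr g p := by
  simp only [Dr, pt, px, py, pz, h.fderiv_eq]

end LocalOperators

/-- For `f` obtained from a holomorphic `F = u + iv` by Fueter's construction,
`D_l f = D_r f = -2 v(t,r) / r` on the set of quaternions with nonzero imaginary part. -/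
theorem fueter_construction_Dl_Dr
    (F : ℂ → ℂ) (hF : DifferentiableOn ℂ F {z : ℂ | 0 < z.im})
    (f : ℍ[ℝ] → ℍ[ℝ])
    (hf : ∀ p : ℍ[ℝ], Quaternion.im p ≠ 0 →
      f p = ((F ⟨p.re, rad p⟩).re : ℍ[ℝ]) + iot p * ((F ⟨p.re, rad p⟩).im : ℍ[ℝ])) :
    ∀ p : ℍ[ℝ], Quaternion.im p ≠ 0 →
      Dl f p = ((-2 * (F ⟨p.re, rad p⟩).im / rad p : ℝ) : ℍ[ℝ]) ∧
      Dr f p = ((-2 * (F ⟨p.re, rad p⟩).im / rad p : ℝ) : ℍ[ℝ]) := by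
  intro p hp
  have hFp : DifferentiableAt ℂ F (slicePoint p) :=
    hF.differentiableAt ((isOpen_lt continuous_const Complex.continuous_im).mem_nhds (rad_pos hp))
  have hfF : f =ᶠ[nhds p] fueterMap F :=
    (Quaternion.continuous_im.continuousAt.eventually_ne hp).mono hf
  rw [hfF.Dl_eq, hfF.Dr_eq]
  exact ⟨Dl_fueterMap hFp hp, Dr_fueterMap hFp hp⟩
end
end

section
/- Let u, v be real-valued C¹ functions of (α,β) on a region where sin β ≠ 0, and let F = u + ι(α,β)·v. Then ∂F/∂ιₗ = 2v holds if and only if ∂u/∂ιₗ = ι·(∂v/∂ιₗ). -/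
open Quaternion

noncomputable section

/-- `ι(α,β) = cos α sin β · i + sin α sin β · j + cos β · k`, a unit imaginary quaternion. -/
def iota (α β : ℝ) : ℍ[ℝ] :=
  ⟨0, Real.cos α * Real.sin β, Real.sin α * Real.sin β, Real.cos β⟩
/-- `ι_α = ∂ι/∂α`. -/
def iotaA (α β : ℝ) : ℍ[ℝ] := deriv (fun a => iota a β) α
/-- `ι_β = ∂ι/∂β`. -/
def iotaB (α β : ℝ) : ℍ[ℝ] := deriv (fun b => iota α b) β

/-- Partial derivative in `α` of a quaternion-valued function of `(α,β)`. -/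
def pA (g : ℝ → ℝ → ℍ[ℝ]) (α β : ℝ) : ℍ[ℝ] := deriv (fun a => g a β) α
/-- Partial derivative in `β` of a quaternion-valued function of `(α,β)`. -/
def pB (g : ℝ → ℝ → ℍ[ℝ]) (α β : ℝ) : ℍ[ℝ] := deriv (fun b => g α b) β
/-- The left angular derivative `∂g/∂ιₗ := ι_α⁻¹ (∂g/∂α) + ι_β⁻¹ (∂g/∂β)`. -/
def DI (g : ℝ → ℝ → ℍ[ℝ]) (α β : ℝ) : ℍ[ℝ] :=
  (iotaA α β)⁻¹ * pA g α β + (iotaB α β)⁻¹ * pB g α β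

/-
Differentiating `F = u + ι v` gives `F_α = u_α + v ι_α + v_α ι` and `F_β = u_β + v ι_β + v_β ι`.
Since `ι_α` and `ι_β` are pure quaternions orthogonal to `ι`, they anticommute with `ι`, and so do
their inverses. Hence `ι_α⁻¹ (v_α ι) + ι_β⁻¹ (v_β ι) = -ι (∂v/∂ιₗ)`, while `ι_α⁻¹ ι_α = ι_β⁻¹ ι_β = 1`
contribute `2v`: altogether `∂F/∂ιₗ = ∂u/∂ιₗ + 2v - ι (∂v/∂ιₗ)`, which is `2v` exactly when
`∂u/∂ιₗ = ι (∂v/∂ιₗ)`. The condition `sin β ≠ 0` makes `ι_α` invertible.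
-/

section PartialDifferentiability

variable {𝕜 E F G : Type*} [NontriviallyNormedField 𝕜] [NormedAddCommGroup E] [NormedSpace 𝕜 E]
  [NormedAddCommGroup F] [NormedSpace 𝕜 F] [NormedAddCommGroup G] [NormedSpace 𝕜 G]
  {f : E × F → G} {x : E} {y : F}

theorem DifferentiableAt.comp_prodMk_left (h : DifferentiableAt 𝕜 f (x, y)) :
    DifferentiableAt 𝕜 (fun a => f (a, y)) x :=
  h.comp x (hasFDerivAt_prodMk_left x y).differentiableAt

theorem DifferentiableAt.comp_prodMk_right (h : DifferentiableAt 𝕜 f (x, y)) :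
    DifferentiableAt 𝕜 (fun b => f (x, b)) y :=
  h.comp y (hasFDerivAt_prodMk_right x y).differentiableAt

end PartialDifferentiability

theorem inv_mul_eq_neg_mul_inv {D : Type*} [DivisionRing D] {a b : D} (h : a * b = -(b * a)) :
    a⁻¹ * b = -(b * a⁻¹) := by
  rcases eq_or_ne a 0 with rfl | ha
  · simp
  have : b * a⁻¹ = -(a⁻¹ * b) :=
    calc b * a⁻¹ = a⁻¹ * (a * b) * a⁻¹ := by rw [← mul_assoc, inv_mul_cancel₀ ha, one_mul]
      _ = -(a⁻¹ * b) := by simp [h, mul_assoc, ha]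
  rw [this, neg_neg]

/-- The anonymous constructor alone would produce a term of type `QuaternionAlgebra ℝ (-1) 0 (-1)`,
which does not carry the normed-space instances of `ℍ[ℝ]`. -/
def quat (a b c d : ℝ) : ℍ[ℝ] := ⟨a, b, c, d⟩

@[simp] theorem quat_re (a b c d : ℝ) : (quat a b c d).re = a := rfl
@[simp] theorem quat_imI (a b c d : ℝ) : (quat a b c d).imI = b := rfl
@[simp] theorem quat_imJ (a b c d : ℝ) : (quat a b c d).imJ = c := rfl
@[simp] theorem quat_imK (a b c d : ℝ) : (quat a b c d).imK = d := rfl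

namespace Quaternion

theorem mul_eq_neg_mul_of_re_eq_zero {R : Type*} [CommRing R] {a b : ℍ[R]} (ha : a.re = 0)
    (hb : b.re = 0) (hab : a.imI * b.imI + a.imJ * b.imJ + a.imK * b.imK = 0) :
    a * b = -(b * a) := by
  ext <;> simp only [re_mul, imI_mul, imJ_mul, imK_mul, re_neg, imI_neg, imJ_neg, imK_neg, ha, hb]
  · linear_combination -2 * hab
  all_goals ring

theorem hasDerivAt_coe {f : ℝ → ℝ} {f' x : ℝ} (h : HasDerivAt f f' x) :
    HasDerivAt (fun t => (f t : ℍ[ℝ])) (f' : ℍ[ℝ]) x := by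
  simpa only [← coe_mul_eq_smul, mul_one] using h.smul_const (1 : ℍ[ℝ])

theorem hasDerivAt_quat {f₁ f₂ f₃ f₄ : ℝ → ℝ} {f₁' f₂' f₃' f₄' x : ℝ} (h₁ : HasDerivAt f₁ f₁' x)
    (h₂ : HasDerivAt f₂ f₂' x) (h₃ : HasDerivAt f₃ f₃' x) (h₄ : HasDerivAt f₄ f₄' x) :
    HasDerivAt (fun t => quat (f₁ t) (f₂ t) (f₃ t) (f₄ t)) (quat f₁' f₂' f₃' f₄') x := by
  have hsum : (fun t => quat (f₁ t) (f₂ t) (f₃ t) (f₄ t)) = fun t => f₁ t • quat 1 0 0 0 +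
      f₂ t • quat 0 1 0 0 + f₃ t • quat 0 0 1 0 + f₄ t • quat 0 0 0 1 := by
    funext t
    ext <;> simp
  rw [hsum]
  refine ((((h₁.smul_const _).add (h₂.smul_const _)).add (h₃.smul_const _)).add
    (h₄.smul_const _)).congr_deriv ?_
  ext <;> simp

end Quaternion

open Real

theorem hasDerivAt_iota_fst (α β : ℝ) :
    HasDerivAt (fun a => iota a β) (quat 0 (-sin α * sin β) (cos α * sin β) 0) α :=
  hasDerivAt_quat (hasDerivAt_const α 0) ((hasDerivAt_cos α).mul_const (sin β))
    ((hasDerivAt_sin α).mul_const (sin β)) (hasDerivAt_const α (cos β))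

theorem hasDerivAt_iota_snd (α β : ℝ) :
    HasDerivAt (fun b => iota α b) (quat 0 (cos α * cos β) (sin α * cos β) (-sin β)) β :=
  hasDerivAt_quat (hasDerivAt_const β 0) ((hasDerivAt_sin β).const_mul (cos α))
    ((hasDerivAt_sin β).const_mul (sin α)) (hasDerivAt_cos β)

theorem iotaA_eq (α β : ℝ) : iotaA α β = quat 0 (-sin α * sin β) (cos α * sin β) 0 :=
  (hasDerivAt_iota_fst α β).deriv

theorem iotaB_eq (α β : ℝ) : iotaB α β = quat 0 (cos α * cos β) (sin α * cos β) (-sin β) :=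
  (hasDerivAt_iota_snd α β).deriv

theorem iotaA_mul_iota (α β : ℝ) : iotaA α β * iota α β = -(iota α β * iotaA α β) := by
  rw [iotaA_eq]
  exact mul_eq_neg_mul_of_re_eq_zero rfl rfl (by simp [iota]; ring)

theorem iotaB_mul_iota (α β : ℝ) : iotaB α β * iota α β = -(iota α β * iotaB α β) := by
  rw [iotaB_eq]
  refine mul_eq_neg_mul_of_re_eq_zero rfl rfl ?_
  simp only [iota, quat_imI, quat_imJ, quat_imK]
  linear_combination sin β * cos β * sin_sq_add_cos_sq α

theorem normSq_iotaA (α β : ℝ) : normSq (iotaA α β) = sin β ^ 2 := by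
  rw [iotaA_eq, normSq_def', quat_re, quat_imI, quat_imJ, quat_imK]
  linear_combination sin β ^ 2 * sin_sq_add_cos_sq α

theorem normSq_iotaB (α β : ℝ) : normSq (iotaB α β) = 1 := by
  rw [iotaB_eq, normSq_def', quat_re, quat_imI, quat_imJ, quat_imK]
  linear_combination cos β ^ 2 * cos_sq_add_sin_sq α + sin_sq_add_cos_sq β

theorem HasDerivAt.coe_add_mul_coe {u v : ℝ → ℝ} {q : ℝ → ℍ[ℝ]} {u' v' t : ℝ} {q' : ℍ[ℝ]}
    (hu : HasDerivAt u u' t) (hv : HasDerivAt v v' t) (hq : HasDerivAt q q' t) :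
    HasDerivAt (fun s => (u s : ℍ[ℝ]) + q s * v s) (u' + (v t • q' + v' • q t)) t := by
  simp only [mul_coe_eq_smul]
  exact (hasDerivAt_coe hu).add (hv.smul hq)

section PartialDerivatives

variable {u v : ℝ → ℝ → ℝ} {α β : ℝ}

theorem pA_coe (hu : DifferentiableAt ℝ (fun a => u a β) α) :
    pA (fun a b => (u a b : ℍ[ℝ])) α β = ((deriv (fun a => u a β) α : ℝ) : ℍ[ℝ]) :=
  (hasDerivAt_coe hu.hasDerivAt).deriv

theorem pB_coe (hu : DifferentiableAt ℝ (fun b => u α b) β) :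
    pB (fun a b => (u a b : ℍ[ℝ])) α β = ((deriv (fun b => u α b) β : ℝ) : ℍ[ℝ]) :=
  (hasDerivAt_coe hu.hasDerivAt).deriv

theorem pA_coe_add_iota_mul_coe (hu : DifferentiableAt ℝ (fun a => u a β) α)
    (hv : DifferentiableAt ℝ (fun a => v a β) α) :
    pA (fun a b => (u a b : ℍ[ℝ]) + iota a b * (v a b : ℍ[ℝ])) α β
      = deriv (fun a => u a β) α + (v α β • iotaA α β + deriv (fun a => v a β) α • iota α β) :=
  (hu.hasDerivAt.coe_add_mul_coe hv.hasDerivAt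
    (hasDerivAt_iota_fst α β).differentiableAt.hasDerivAt).deriv

theorem pB_coe_add_iota_mul_coe (hu : DifferentiableAt ℝ (fun b => u α b) β)
    (hv : DifferentiableAt ℝ (fun b => v α b) β) :
    pB (fun a b => (u a b : ℍ[ℝ]) + iota a b * (v a b : ℍ[ℝ])) α β
      = deriv (fun b => u α b) β + (v α β • iotaB α β + deriv (fun b => v α b) β • iota α β) :=
  (hu.hasDerivAt.coe_add_mul_coe hv.hasDerivAt
    (hasDerivAt_iota_snd α β).differentiableAt.hasDerivAt).deriv

end PartialDerivatives

theorem iotaA_ne_zero (α : ℝ) {β : ℝ} (hβ : sin β ≠ 0) : iotaA α β ≠ 0 := by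
  rw [Ne, ← normSq_eq_zero, normSq_iotaA]
  exact pow_ne_zero 2 hβ

theorem iotaB_ne_zero (α β : ℝ) : iotaB α β ≠ 0 := by
  rw [Ne, ← normSq_eq_zero, normSq_iotaB]
  exact one_ne_zero

theorem DI_coe_add_iota_mul_coe {u v : ℝ → ℝ → ℝ} {α β : ℝ} (hβ : sin β ≠ 0)
    (hu : DifferentiableAt ℝ (fun p : ℝ × ℝ => u p.1 p.2) (α, β))
    (hv : DifferentiableAt ℝ (fun p : ℝ × ℝ => v p.1 p.2) (α, β)) :
    DI (fun a b => (u a b : ℍ[ℝ]) + iota a b * (v a b : ℍ[ℝ])) α β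
      = DI (fun a b => (u a b : ℍ[ℝ])) α β + ((2 * v α β : ℝ) : ℍ[ℝ])
        - iota α β * DI (fun a b => (v a b : ℍ[ℝ])) α β := by
  have hA := iotaA_ne_zero α hβ
  have hB := iotaB_ne_zero α β
  have hAι := inv_mul_eq_neg_mul_inv (iotaA_mul_iota α β)
  have hBι := inv_mul_eq_neg_mul_inv (iotaB_mul_iota α β)
  have h2v : ((2 * v α β : ℝ) : ℍ[ℝ]) = v α β • (1 : ℍ[ℝ]) + v α β • 1 := by
    rw [← add_smul, ← two_mul, ← coe_mul_eq_smul, mul_one]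
  rw [DI, DI, DI, pA_coe_add_iota_mul_coe hu.comp_prodMk_left hv.comp_prodMk_left,
    pB_coe_add_iota_mul_coe hu.comp_prodMk_right hv.comp_prodMk_right,
    pA_coe hu.comp_prodMk_left, pB_coe hu.comp_prodMk_right,
    pA_coe hv.comp_prodMk_left, pB_coe hv.comp_prodMk_right]
  simp only [mul_add, mul_smul_comm, inv_mul_cancel₀ hA, inv_mul_cancel₀ hB, mul_coe_eq_smul,
    hAι, hBι, h2v, smul_neg]
  abel

/-- For real-valued `C¹` functions `u, v` of `(α,β)` on a region where
`sin β ≠ 0` and `F = u + ι v`, the equation `∂F/∂ιₗ = 2v` holds iff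
`∂u/∂ιₗ = ι (∂v/∂ιₗ)`. -/
theorem angular_deriv_eq_iff (S : Set (ℝ × ℝ)) (hS : IsOpen S)
    (hSsin : ∀ x ∈ S, Real.sin x.2 ≠ 0)
    (u v : ℝ → ℝ → ℝ)
    (hu : ContDiffOn ℝ 1 (fun x : ℝ × ℝ => u x.1 x.2) S)
    (hv : ContDiffOn ℝ 1 (fun x : ℝ × ℝ => v x.1 x.2) S) :
    ∀ x ∈ S,
      (DI (fun a b => ((u a b : ℝ) : ℍ[ℝ]) + iota a b * ((v a b : ℝ) : ℍ[ℝ])) x.1 x.2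
          = ((2 * v x.1 x.2 : ℝ) : ℍ[ℝ]))
      ↔ DI (fun a b => ((u a b : ℝ) : ℍ[ℝ])) x.1 x.2
          = iota x.1 x.2 * DI (fun a b => ((v a b : ℝ) : ℍ[ℝ])) x.1 x.2 := by
  intro x hx
  have hud := (hu.differentiableOn one_ne_zero).differentiableAt (hS.mem_nhds hx)
  have hvd := (hv.differentiableOn one_ne_zero).differentiableAt (hS.mem_nhds hx)
  rw [DI_coe_add_iota_mul_coe (hSsin x hx) hud hvd, add_sub_right_comm, add_eq_right, sub_eq_zero]
end
end

section
/- Let u, v be real-valued C² functions of (α,β) on a region where sin β ≠ 0, satisfying the Cauchy–Riemann type system (1/sin β)·∂u/∂α = ∂v/∂β and (1/sin β)·∂v/∂α = −∂u/∂β. Then (1/sin²β)·(∂²v/∂α²) + (∂²v/∂β²) = −cot β·(∂v/∂β). -/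
/-!
Differentiate the first equation of the system in `β` and the second in `α`. Both results
involve a mixed second partial derivative of `u`, and these agree because `u` is `C²`
(Schwarz). Equating them eliminates `u` and leaves the stated equation for `v`.
-/

noncomputable section

open Filter Topology

section PartialDerivatives

variable {F : Type*} [NormedAddCommGroup F] [NormedSpace ℝ F] {f : ℝ × ℝ → F}
  {f' : ℝ × ℝ →L[ℝ] F} {p : ℝ × ℝ}

theorem HasFDerivAt.hasDerivAt_fst (hf : HasFDerivAt f f' p) :
    HasDerivAt (fun t => f (t, p.2)) (f' (1, 0)) p.1 :=
  hf.comp_hasDerivAt p.1 ((hasDerivAt_id p.1).prodMk (hasDerivAt_const p.1 p.2))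

theorem HasFDerivAt.hasDerivAt_snd (hf : HasFDerivAt f f' p) :
    HasDerivAt (fun t => f (p.1, t)) (f' (0, 1)) p.2 :=
  hf.comp_hasDerivAt p.2 ((hasDerivAt_const p.2 p.1).prodMk (hasDerivAt_id p.2))

theorem ContDiffAt.hasFDerivAt_fderiv_apply (hf : ContDiffAt ℝ 2 f p) (w : ℝ × ℝ) :
    HasFDerivAt (fun q => fderiv ℝ f q w) ((fderiv ℝ (fderiv ℝ f) p).flip w) p := by
  have h := ((hf.fderiv_right (m := 1) le_rfl).differentiableAt one_ne_zero).hasFDerivAt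
  simpa using h.clm_apply (hasFDerivAt_const w p)

theorem ContDiffAt.eventually_differentiableAt (hf : ContDiffAt ℝ 2 f p) :
    ∀ᶠ q in 𝓝 p, DifferentiableAt ℝ f q :=
  (hf.eventually (by simp)).mono fun _ hq => hq.differentiableAt (by norm_num)

theorem ContDiffAt.hasFDerivAt_deriv_fst (hf : ContDiffAt ℝ 2 f p) :
    HasFDerivAt (fun q => deriv (fun t => f (t, q.2)) q.1)
      ((fderiv ℝ (fderiv ℝ f) p).flip (1, 0)) p := by
  refine (hf.hasFDerivAt_fderiv_apply (1, 0)).congr_of_eventuallyEq ?_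
  filter_upwards [hf.eventually_differentiableAt] with q hq
  exact hq.hasFDerivAt.hasDerivAt_fst.deriv

theorem ContDiffAt.hasFDerivAt_deriv_snd (hf : ContDiffAt ℝ 2 f p) :
    HasFDerivAt (fun q => deriv (fun t => f (q.1, t)) q.2)
      ((fderiv ℝ (fderiv ℝ f) p).flip (0, 1)) p := by
  refine (hf.hasFDerivAt_fderiv_apply (0, 1)).congr_of_eventuallyEq ?_
  filter_upwards [hf.eventually_differentiableAt] with q hq
  exact hq.hasFDerivAt.hasDerivAt_snd.deriv

end PartialDerivatives

section Slices

variable {X Y : Type*} [TopologicalSpace X] [TopologicalSpace Y] {s : Set (X × Y)} {p : X × Y}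

theorem eventually_mem_of_mem_nhds_left (hs : s ∈ 𝓝 p) : ∀ᶠ t in 𝓝 p.1, (t, p.2) ∈ s :=
  (continuous_id.prodMk continuous_const).continuousAt.preimage_mem_nhds hs

theorem eventually_mem_of_mem_nhds_right (hs : s ∈ 𝓝 p) : ∀ᶠ t in 𝓝 p.2, (p.1, t) ∈ s :=
  (continuous_const.prodMk continuous_id).continuousAt.preimage_mem_nhds hs

end Slices

/-- If real-valued `C²` functions `u, v` of `(α,β)` on a region where
`sin β ≠ 0` satisfy the Cauchy–Riemann type system `(1/sin β) ∂u/∂α = ∂v/∂β` and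
`(1/sin β) ∂v/∂α = -∂u/∂β`, then
`(1/sin²β) ∂²v/∂α² + ∂²v/∂β² = -cot β ∂v/∂β`. -/
theorem CR_implies_angular_laplace (S : Set (ℝ × ℝ)) (hS : IsOpen S)
    (hSsin : ∀ x ∈ S, Real.sin x.2 ≠ 0)
    (u v : ℝ → ℝ → ℝ)
    (hu : ContDiffOn ℝ 2 (fun x : ℝ × ℝ => u x.1 x.2) S)
    (hv : ContDiffOn ℝ 2 (fun x : ℝ × ℝ => v x.1 x.2) S)
    (hCR1 : ∀ x ∈ S, (Real.sin x.2)⁻¹ * deriv (fun a => u a x.2) x.1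
      = deriv (fun b => v x.1 b) x.2)
    (hCR2 : ∀ x ∈ S, (Real.sin x.2)⁻¹ * deriv (fun a => v a x.2) x.1
      = - deriv (fun b => u x.1 b) x.2) :
    ∀ x ∈ S,
      ((Real.sin x.2)^2)⁻¹ * deriv (fun a => deriv (fun a' => v a' x.2) a) x.1
          + deriv (fun b => deriv (fun b' => v x.1 b') b) x.2
        = -(Real.cos x.2 / Real.sin x.2) * deriv (fun b => v x.1 b) x.2 := by
  intro x hx
  have hSx := hS.mem_nhds hx
  have hux := hu.contDiffAt hSx
  set D2u := fderiv ℝ (fderiv ℝ fun x : ℝ × ℝ => u x.1 x.2) x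
  have hv_ββ := (hv.contDiffAt hSx).hasFDerivAt_deriv_snd.hasDerivAt_snd
  have hu_αβ : D2u (0, 1) (1, 0) = Real.cos x.2 * deriv (fun b => v x.1 b) x.2
      + Real.sin x.2 * deriv (fun b => deriv (fun b' => v x.1 b') b) x.2 := by
    refine hux.hasFDerivAt_deriv_fst.hasDerivAt_snd.unique
      (((Real.hasDerivAt_sin x.2).mul hv_ββ.differentiableAt.hasDerivAt).congr_of_eventuallyEq ?_)
    filter_upwards [eventually_mem_of_mem_nhds_right hSx] with b hb
    have h := hCR1 _ hb
    dsimp only at h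
    rw [Pi.mul_apply, ← h, mul_inv_cancel_left₀ (hSsin _ hb)]
  have hv_αα : deriv (fun a => deriv (fun a' => v a' x.2) a) x.1
      = -Real.sin x.2 * D2u (1, 0) (0, 1) := by
    refine ((hux.hasFDerivAt_deriv_snd.hasDerivAt_fst.const_mul
      (-Real.sin x.2)).congr_of_eventuallyEq ?_).deriv
    filter_upwards [eventually_mem_of_mem_nhds_left hSx] with a ha
    rw [neg_mul, ← mul_neg, ← hCR2 _ ha, mul_inv_cancel_left₀ (hSsin _ ha)]
  rw [hv_αα, hux.isSymmSndFDerivAt (by simp) (1, 0) (0, 1), hu_αβ]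
  field_simp [hSsin x hx]
  ring
end
end
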